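/- The sequence a_Δ = γ_{Δ-1}(α_Δ) (Δ ≥ 3) converges to e as Δ → ∞. -/

import Mathlib

/-!
Since `α_Δ > 1`, `γ_{Δ-1}(1) ≤ a_Δ ≤ exp α_Δ`, and `γ_{Δ-1}(1) → e`. The defining equation says
`(α_Δ - 1) γ_{Δ-1}(α_Δ) = α_Δ^{Δ-1}/(Δ-1)!`; bounding `γ_{Δ-1}(α_Δ)` below by its top term gives
`(α_Δ - 1)(Δ - 2) ≤ 1`, so `α_Δ → 1` and `exp α_Δ → e`.
-/

open Filter Topology

/-- `gam Δ x = ∑_{k=0}^{Δ-1} x^k / k!` -/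
noncomputable def gam (Δ : ℕ) (x : ℝ) : ℝ :=
  ∑ k ∈ Finset.range Δ, x ^ k / (Nat.factorial k)

lemma gam_succ (n : ℕ) (x : ℝ) : gam (n + 1) x = gam n x + x ^ n / n.factorial :=
  Finset.sum_range_succ _ _

lemma gam_nonneg (n : ℕ) {x : ℝ} (hx : 0 ≤ x) : 0 ≤ gam n x :=
  Finset.sum_nonneg fun _ _ => by positivity

lemma pow_div_factorial_le_gam_succ (n : ℕ) {x : ℝ} (hx : 0 ≤ x) :
    x ^ n / n.factorial ≤ gam (n + 1) x := by
  rw [gam_succ]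
  linarith [gam_nonneg n hx]

lemma gam_le_gam (n : ℕ) {x y : ℝ} (hx : 0 ≤ x) (hxy : x ≤ y) : gam n x ≤ gam n y :=
  Finset.sum_le_sum fun _ _ => by gcongr

lemma gam_le_exp (n : ℕ) {x : ℝ} (hx : 0 ≤ x) : gam n x ≤ Real.exp x :=
  Real.sum_le_exp_of_nonneg hx n

lemma tendsto_gam_exp (x : ℝ) : Tendsto (fun n => gam n x) atTop (𝓝 (Real.exp x)) := by
  rw [Real.exp_eq_exp_ℝ]
  simpa [gam] using (NormedSpace.expSeries_div_hasSum_exp x).tendsto_sum_nat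

lemma sub_one_mul_le_one_of_mul_gam_eq {n : ℕ} {x : ℝ} (hx : 0 ≤ x)
    (h : x * gam (n + 1) x = gam (n + 2) x) : (x - 1) * n ≤ 1 := by
  rcases le_or_gt x 1 with hx1 | hx1
  · nlinarith [n.cast_nonneg (α := ℝ)]
  have hkey : (x - 1) * gam (n + 1) x = x ^ (n + 1) / (n + 1).factorial := by
    rw [gam_succ (n + 1)] at h
    linarith
  have hfac : ((n + 1).factorial : ℝ) = (n + 1) * n.factorial := by
    push_cast [Nat.factorial_succ]
    ring
  have hpos : 0 < x ^ n / n.factorial := by positivity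
  have hscaled : (x - 1) * (x ^ n / n.factorial) ≤ x / (n + 1) * (x ^ n / n.factorial) :=
    calc (x - 1) * (x ^ n / n.factorial)
        ≤ (x - 1) * gam (n + 1) x :=
          mul_le_mul_of_nonneg_left (pow_div_factorial_le_gam_succ n hx) (by linarith)
      _ = x / (n + 1) * (x ^ n / n.factorial) := by
          rw [hkey, hfac, pow_succ]
          field_simp
  have hcancel : x - 1 ≤ x / (n + 1) := le_of_mul_le_mul_right hscaled hpos
  rw [le_div_iff₀ (by positivity)] at hcancel
  linarith

lemma tendsto_one_of_mul_gam_eq {α : ℕ → ℝ}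
    (hα : ∀ᶠ Δ in atTop, 1 ≤ α Δ ∧ α Δ * gam (Δ - 1) (α Δ) = gam Δ (α Δ)) :
    Tendsto α atTop (𝓝 1) := by
  rw [← tendsto_add_atTop_iff_nat 2]
  have hupper : Tendsto (fun n : ℕ => 1 + 1 / (n : ℝ)) atTop (𝓝 1) := by
    simpa using tendsto_one_div_atTop_nhds_zero_nat.const_add (1 : ℝ)
  refine tendsto_of_tendsto_of_tendsto_of_le_of_le' tendsto_const_nhds hupper ?_ ?_
  · filter_upwards [tendsto_add_atTop_nat 2 hα] with n hn using hn.1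
  · filter_upwards [tendsto_add_atTop_nat 2 hα, eventually_gt_atTop 0] with n ⟨h1, heq⟩ hn
    have hmul := sub_one_mul_le_one_of_mul_gam_eq (by linarith) heq
    rw [← sub_le_iff_le_add', le_div_iff₀ (by positivity)]
    exact hmul

/-- The sequence `a_Δ = γ_{Δ-1}(α_Δ)` converges to `e` as `Δ → ∞`, where `α_Δ ∈ (1,∞)`
solves `x·γ_{Δ-1}(x) = γ_Δ(x)`. -/
theorem a_Delta_tendsto_e (α : ℕ → ℝ)
    (hα : ∀ Δ : ℕ, 3 ≤ Δ → α Δ ∈ Set.Ioi (1 : ℝ) ∧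
      α Δ * gam (Δ - 1) (α Δ) = gam Δ (α Δ)) :
    Filter.Tendsto (fun Δ : ℕ => gam (Δ - 1) (α Δ)) Filter.atTop
      (nhds (Real.exp 1)) := by
  have hα' : ∀ᶠ Δ in atTop, 1 < α Δ ∧ α Δ * gam (Δ - 1) (α Δ) = gam Δ (α Δ) :=
    eventually_atTop.2 ⟨3, hα⟩
  have hα_one : Tendsto α atTop (𝓝 1) :=
    tendsto_one_of_mul_gam_eq (hα'.mono fun _ h => ⟨h.1.le, h.2⟩)
  have hlower : Tendsto (fun Δ => gam (Δ - 1) 1) atTop (𝓝 (Real.exp 1)) :=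
    (tendsto_gam_exp 1).comp (tendsto_sub_atTop_nat 1)
  have hupper : Tendsto (fun Δ => Real.exp (α Δ)) atTop (𝓝 (Real.exp 1)) :=
    (Real.continuous_exp.tendsto 1).comp hα_one
  refine tendsto_of_tendsto_of_tendsto_of_le_of_le' hlower hupper ?_ ?_
  · filter_upwards [hα'] with Δ h using gam_le_gam _ zero_le_one h.1.le
  · filter_upwards [hα'] with Δ h using gam_le_exp _ (by linarith [h.1])
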